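/- Suppose there exist simple 4-(17,5,3), 4-(17,6,12), 4-(17,7,6), 4-(17,8,85), 4-(17,9,153) and 4-(17,10,612) designs, and simple 4-(18,5,2), 4-(18,6,11), 4-(18,7,28), 4-(18,8,70), 4-(18,9,238) and 4-(18,10,357) designs. Then there exists a simple 4-(35, 10, 63903) design (note 63903 = 3043 × 21). -/

import Mathlib

/-- `SimpleDesignExists t v k lam` asserts the existence of a simple
`t-(v, k, lam)` design: a `v`-set `X` together with a set `B` of distinct
`k`-element subsets of `X` (blocks) such that every `t`-element subset of `X`
is contained in exactly `lam` blocks. -/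
def SimpleDesignExists (t v k lam : ℕ) : Prop :=
  ∃ (X : Finset ℕ) (B : Finset (Finset ℕ)),
    X.card = v ∧
    (∀ b ∈ B, b ⊆ X ∧ b.card = k) ∧
    (∀ T ⊆ X, T.card = t → (B.filter (fun b => T ⊆ b)).card = lam)

/-!
Split the 35 points into a 17-set `X` and an 18-set `Y` and take as blocks the sets `a ∪ c`
with `|a| = i`, `|c| = 10 - i`: for `i ≥ 5`, `a` runs over the blocks of the given
`4-(17, i, ·)` design and `c` over all `(10 - i)`-subsets of `Y`; for `i ≤ 4`, `a` runs over all
`i`-subsets of `X` and `c` over the blocks of the given `4-(18, 10 - i, ·)` design.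
A `t-(v, k, λ)` design is also a `j`-design for `j ≤ t`, with index
`λ_j = λ C(v - j, t - j) / C(k - j, t - j)` by double counting, so a `4`-set `T` meeting `X`
in `j` points lies in `∑ᵢ λ_j(Aᵢ) λ_{4-j}(Cᵢ)` blocks; this sum is `63903` for each `j ≤ 4`.
-/

open Finset FinsetFamily

variable {α β : Type*} [DecidableEq α]

def IsDesign (t k lam : ℕ) (X : Finset α) (B : Finset (Finset α)) : Prop :=
  (∀ b ∈ B, b ⊆ X ∧ #b = k) ∧ ∀ T ⊆ X, #T = t → #{b ∈ B | T ⊆ b} = lam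

def IsBalancedUpTo (t : ℕ) (f : ℕ → ℕ) (X : Finset α) (B : Finset (Finset α)) : Prop :=
  ∀ T ⊆ X, #T ≤ t → #{b ∈ B | T ⊆ b} = f #T

/-- The division is exact for `j ≤ t ≤ k` (`IsDesign.card_filter_mul_choose`). -/
def designIndex (t v k lam j : ℕ) : ℕ := lam * (v - j).choose (t - j) / (k - j).choose (t - j)

def completeIndex (v m j : ℕ) : ℕ := if j ≤ m then (v - j).choose (m - j) else 0

theorem IsDesign.map [DecidableEq β] {t k lam : ℕ} {X : Finset α} {B : Finset (Finset α)}
    (hB : IsDesign t k lam X B) (e : α ↪ β) :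
    IsDesign t k lam (X.map e) (B.map (mapEmbedding e).toEmbedding) := by
  refine ⟨fun b hb => ?_, fun T hT hTt => ?_⟩
  · obtain ⟨b, hb', rfl⟩ := mem_map.1 hb
    simpa using hB.1 b hb'
  · obtain ⟨T, hTX, rfl⟩ := subset_map_iff.1 hT
    rw [filter_map, card_map]
    simpa [Function.comp_def] using hB.2 T hTX (by simpa using hTt)

theorem SimpleDesignExists.exists_isDesign {t v k lam : ℕ} (h : SimpleDesignExists t v k lam)
    {Y : Finset ℕ} (hY : #Y = v) : ∃ B, IsDesign t k lam Y B := by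
  obtain ⟨X, B, hX, hB : IsDesign t k lam X B⟩ := h
  obtain ⟨σ, rfl⟩ := Equiv.Perm.exists_map_finset_eq X Y (hX.trans hY.symm)
  exact ⟨_, hB.map σ.toEmbedding⟩

theorem IsDesign.card_filter_mul_choose {t k lam : ℕ} {X : Finset α} {B : Finset (Finset α)}
    (hB : IsDesign t k lam X B) {T : Finset α} (hTX : T ⊆ X) (hTt : #T ≤ t) :
    #{b ∈ B | T ⊆ b} * (k - #T).choose (t - #T) = (#X - #T).choose (t - #T) * lam := by
  rw [← card_filter_powersetCard_subset T X t hTX hTt]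
  refine card_mul_eq_card_mul (fun b S => S ⊆ b) (fun b hb => ?_) (fun S hS => ?_)
  · obtain ⟨hb, hTb⟩ := mem_filter.1 hb
    rw [← (hB.1 b hb).2, ← card_filter_powersetCard_subset T b t hTb hTt]
    congr 1
    ext S
    simp only [bipartiteAbove, mem_filter, mem_powersetCard]
    exact ⟨fun h => ⟨⟨h.2, h.1.1.2⟩, h.1.2⟩,
      fun h => ⟨⟨⟨h.1.1.trans (hB.1 b hb).1, h.1.2⟩, h.2⟩, h.1.1⟩⟩
  · obtain ⟨hS, hTS⟩ := mem_filter.1 hS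
    rw [mem_powersetCard] at hS
    rw [← hB.2 S hS.1 hS.2, bipartiteBelow, filter_filter]
    congr 1
    ext b
    simp only [mem_filter]
    exact ⟨fun h => ⟨h.1, h.2.2⟩, fun h => ⟨h.1, hTS.trans h.2, h.2⟩⟩

theorem IsDesign.isBalancedUpTo {t k lam : ℕ} {X : Finset α} {B : Finset (Finset α)}
    (hB : IsDesign t k lam X B) (htk : t ≤ k) :
    IsBalancedUpTo t (designIndex t #X k lam) X B := fun T hTX hTt => by
  rw [designIndex, mul_comm, ← hB.card_filter_mul_choose hTX hTt, Nat.mul_div_cancel]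
  exact Nat.choose_pos (by omega)

theorem isBalancedUpTo_powersetCard (t m : ℕ) (X : Finset α) :
    IsBalancedUpTo t (completeIndex #X m) X (X.powersetCard m) := fun T hTX _ => by
  rw [completeIndex]
  split_ifs with hTm
  · exact card_filter_powersetCard_subset T X m hTX hTm
  · rw [card_eq_zero, filter_eq_empty_iff]
    intro S hS hTS
    have := card_le_card hTS
    rw [(mem_powersetCard.1 hS).2] at this
    omega

section DisjointUnion

variable {X Y : Finset α}

theorem union_inter_eq_left_of_disjoint (hXY : Disjoint X Y) {a c : Finset α} (ha : a ⊆ X)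
    (hc : c ⊆ Y) : (a ∪ c) ∩ X = a := by
  rw [union_inter_distrib_right, inter_eq_left.2 ha,
    disjoint_iff_inter_eq_empty.1 (disjoint_of_subset_left hc hXY.symm), union_empty]

theorem union_inter_eq_right_of_disjoint (hXY : Disjoint X Y) {a c : Finset α} (ha : a ⊆ X)
    (hc : c ⊆ Y) : (a ∪ c) ∩ Y = c := by
  rw [union_comm, union_inter_eq_left_of_disjoint hXY.symm hc ha]

theorem subset_union_iff_of_disjoint (hXY : Disjoint X Y) {a c T : Finset α} (ha : a ⊆ X)
    (hc : c ⊆ Y) (hT : T ⊆ X ∪ Y) : T ⊆ a ∪ c ↔ T ∩ X ⊆ a ∧ T ∩ Y ⊆ c := by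
  refine ⟨fun h => ⟨?_, ?_⟩, fun h => ?_⟩
  · rw [← union_inter_eq_left_of_disjoint hXY ha hc]
    exact inter_subset_inter_right h
  · rw [← union_inter_eq_right_of_disjoint hXY ha hc]
    exact inter_subset_inter_right h
  · rw [← inter_eq_left.2 hT, inter_union_distrib_left]
    exact union_subset_union h.1 h.2

theorem card_filter_sups_of_disjoint (hXY : Disjoint X Y) {A C : Finset (Finset α)}
    (hA : ∀ a ∈ A, a ⊆ X) (hC : ∀ c ∈ C, c ⊆ Y) {T : Finset α} (hT : T ⊆ X ∪ Y) :
    #{b ∈ A ⊻ C | T ⊆ b} = #{a ∈ A | T ∩ X ⊆ a} * #{c ∈ C | T ∩ Y ⊆ c} := by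
  have hfilter : {b ∈ A ⊻ C | T ⊆ b} = {a ∈ A | T ∩ X ⊆ a} ⊻ {c ∈ C | T ∩ Y ⊆ c} := by
    ext b
    simp only [mem_filter, mem_sups, sup_eq_union]
    constructor
    · rintro ⟨⟨a, ha, c, hc, rfl⟩, hTb⟩
      have := (subset_union_iff_of_disjoint hXY (hA a ha) (hC c hc) hT).1 hTb
      exact ⟨a, ⟨ha, this.1⟩, c, ⟨hc, this.2⟩, rfl⟩
    · rintro ⟨a, ⟨ha, hTa⟩, c, ⟨hc, hTc⟩, rfl⟩
      exact ⟨⟨a, ha, c, hc, rfl⟩,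
        (subset_union_iff_of_disjoint hXY (hA a ha) (hC c hc) hT).2 ⟨hTa, hTc⟩⟩
  rw [hfilter, card_sups_iff]
  rintro ⟨a, c⟩ hac ⟨a', c'⟩ hac' h
  simp only [Set.mem_prod, mem_coe, mem_filter, sup_eq_union] at hac hac' h
  obtain ⟨⟨ha, -⟩, hc, -⟩ := hac
  obtain ⟨⟨ha', -⟩, hc', -⟩ := hac'
  refine Prod.ext ?_ ?_
  · calc a = (a ∪ c) ∩ X := (union_inter_eq_left_of_disjoint hXY (hA a ha) (hC c hc)).symm
      _ = a' := by rw [h, union_inter_eq_left_of_disjoint hXY (hA a' ha') (hC c' hc')]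
  · calc c = (a ∪ c) ∩ Y := (union_inter_eq_right_of_disjoint hXY (hA a ha) (hC c hc)).symm
      _ = c' := by rw [h, union_inter_eq_right_of_disjoint hXY (hA a' ha') (hC c' hc')]

theorem isDesign_biUnion_sups (hXY : Disjoint X Y) {t k lam : ℕ}
    {A C : ℕ → Finset (Finset α)} {f g : ℕ → ℕ → ℕ}
    (hA : ∀ i ≤ k, ∀ a ∈ A i, a ⊆ X ∧ #a = i) (hC : ∀ i ≤ k, ∀ c ∈ C i, c ⊆ Y ∧ #c = k - i)
    (hAf : ∀ i ≤ k, IsBalancedUpTo t (f i) X (A i))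
    (hCg : ∀ i ≤ k, IsBalancedUpTo t (g i) Y (C i))
    (hsum : ∀ j ≤ t, ∑ i ∈ range (k + 1), f i j * g i (t - j) = lam) :
    IsDesign t k lam (X ∪ Y) ((range (k + 1)).biUnion fun i => A i ⊻ C i) := by
  have hblock : ∀ i ≤ k, ∀ b ∈ A i ⊻ C i, b ⊆ X ∪ Y ∧ #(b ∩ X) = i ∧ #b = k := by
    intro i hi b hb
    obtain ⟨a, ha, c, hc, rfl⟩ := mem_sups.1 hb
    obtain ⟨haX, hai⟩ := hA i hi a ha
    obtain ⟨hcY, hck⟩ := hC i hi c hc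
    rw [sup_eq_union, union_inter_eq_left_of_disjoint hXY haX hcY,
      card_union_of_disjoint (disjoint_of_subset_left haX (disjoint_of_subset_right hcY hXY))]
    exact ⟨union_subset_union haX hcY, hai, by omega⟩
  refine ⟨fun b hb => ?_, fun T hT hTt => ?_⟩
  · obtain ⟨i, hi, hb⟩ := mem_biUnion.1 hb
    obtain ⟨hbXY, -, hbk⟩ := hblock i (mem_range_succ_iff.1 hi) b hb
    exact ⟨hbXY, hbk⟩
  have hsplit : #(T ∩ X) + #(T ∩ Y) = t := by
    rw [← card_union_of_disjoint (disjoint_of_subset_left inter_subset_right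
      (disjoint_of_subset_right inter_subset_right hXY)), ← inter_union_distrib_left,
      inter_eq_left.2 hT, hTt]
  rw [filter_biUnion, card_biUnion, ← hsum #(T ∩ X) (by omega)]
  · refine sum_congr rfl fun i hi => ?_
    have hi := mem_range_succ_iff.1 hi
    rw [card_filter_sups_of_disjoint hXY (fun a ha => (hA i hi a ha).1)
      (fun c hc => (hC i hi c hc).1) hT, hAf i hi _ inter_subset_right (by omega),
      hCg i hi _ inter_subset_right (by omega), ← hsplit, Nat.add_sub_cancel_left]
  · intro i hi i' hi' hne
    refine disjoint_left.2 fun b hb hb' => hne ?_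
    rw [← (hblock i (mem_range_succ_iff.1 hi) b (mem_filter.1 hb).1).2.1,
      (hblock i' (mem_range_succ_iff.1 hi') b (mem_filter.1 hb').1).2.1]

end DisjointUnion

def familyIndex (t v : ℕ) (lam : ℕ → ℕ) (i : ℕ) : ℕ → ℕ :=
  if t < i then designIndex t v i (lam i) else completeIndex v i

theorem exists_isBalancedUpTo_familyIndex {t n v : ℕ} {lam : ℕ → ℕ} {X : Finset α}
    (hX : #X = v) (hD : ∀ k, t < k → k ≤ n → ∃ D, IsDesign t k (lam k) X D) {i : ℕ}
    (hi : i ≤ n) :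
    ∃ A, (∀ a ∈ A, a ⊆ X ∧ #a = i) ∧ IsBalancedUpTo t (familyIndex t v lam i) X A := by
  subst hX
  by_cases hti : t < i
  · obtain ⟨D, hD⟩ := hD i hti hi
    rw [familyIndex, if_pos hti]
    exact ⟨D, hD.1, hD.isBalancedUpTo hti.le⟩
  · rw [familyIndex, if_neg hti]
    exact ⟨X.powersetCard i, fun a ha => mem_powersetCard.1 ha, isBalancedUpTo_powersetCard t i X⟩

theorem designExists_4_35_10
    (h1 : SimpleDesignExists 4 17 5 3)
    (h2 : SimpleDesignExists 4 17 6 12)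
    (h3 : SimpleDesignExists 4 17 7 6)
    (h4 : SimpleDesignExists 4 17 8 85)
    (h5 : SimpleDesignExists 4 17 9 153)
    (h6 : SimpleDesignExists 4 17 10 612)
    (h7 : SimpleDesignExists 4 18 5 2)
    (h8 : SimpleDesignExists 4 18 6 11)
    (h9 : SimpleDesignExists 4 18 7 28)
    (h10 : SimpleDesignExists 4 18 8 70)
    (h11 : SimpleDesignExists 4 18 9 238)
    (h12 : SimpleDesignExists 4 18 10 357)
    : SimpleDesignExists 4 35 10 63903 := by
  have hXY : Disjoint (range 17) (Ico 17 35) := by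
    rw [range_eq_Ico]
    exact Ico_disjoint_Ico_consecutive 0 17 35
  have hX : ∀ k, 4 < k → k ≤ 10 → ∃ D, IsDesign 4 k
      (match k with | 5 => 3 | 6 => 12 | 7 => 6 | 8 => 85 | 9 => 153 | _ => 612)
      (range 17) D := by
    intro k hk hk'
    interval_cases k <;> apply SimpleDesignExists.exists_isDesign _ (card_range 17)
    exacts [h1, h2, h3, h4, h5, h6]
  have hY : ∀ k, 4 < k → k ≤ 10 → ∃ D, IsDesign 4 k
      (match k with | 5 => 2 | 6 => 11 | 7 => 28 | 8 => 70 | 9 => 238 | _ => 357)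
      (Ico 17 35) D := by
    intro k hk hk'
    interval_cases k <;> apply SimpleDesignExists.exists_isDesign _ (Nat.card_Ico 17 35)
    exacts [h7, h8, h9, h10, h11, h12]
  choose! A hA hAf using fun i (hi : i ≤ 10) =>
    exists_isBalancedUpTo_familyIndex (card_range 17) hX hi
  choose! C hC hCg using fun i (hi : i ≤ 10) =>
    exists_isBalancedUpTo_familyIndex (Nat.card_Ico 17 35) hY (Nat.sub_le 10 i)
  refine ⟨_, _, ?_, isDesign_biUnion_sups hXY hA hC hAf hCg ?_⟩
  · simp [card_union_of_disjoint hXY]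
  · decide
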